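/- Fix a finite alphabet K, genome length n, X = (Fin n → K); for each i ∈ Fin n let A_i = (α_i(a,b)) be a connected infinitesimal matrix on K (irreducible) with strictly positive stationary distribution q_i; fix κ ≥ 0 and for each I ⊆ Fin n a symmetric nonnegative similarity function φ on pairs of I-substrings. Then the product distribution q_Λ(x) = ∏_i q_i(x_i) is the unique fixed point of the mutation–recombination equation: if μ is a probability measure on X for which ∑_i ∑_{y_i} ( α_i(y_i,x_i)·μ(x_{Λ∖i}, y_i) − α_i(x_i,y_i)·μ(x) ) + κ·∑_{I⊆Λ} ∑_{y_I} ( φ(y_I,x_I)·μ_I(x_I)·μ(x_{Λ∖I}, y_I) − φ(x_I,y_I)·μ_I(y_I)·μ(x) ) = 0 for all x ∈ X, then μ = q_Λ. -/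

import Mathlib

/-- The substring of a genome `x : Fin n → K` on a subset `I` of positions. -/
def subword {K : Type*} {n : ℕ} (I : Finset (Fin n)) (x : Fin n → K) : ↥I → K :=
  fun i => x i.1

/-- The marginal distribution of a measure `μ` on the genome space on a subset `I`. -/
def marginal {K : Type*} [Fintype K] [DecidableEq K] {n : ℕ}
    (μ : (Fin n → K) → ℝ) (I : Finset (Fin n)) (a : ↥I → K) : ℝ :=
  ∑ x : Fin n → K, if subword I x = a then μ x else 0

/-- `(x_{Λ∖I}, a)`: the genome obtained from `x` by replacing its restriction to `I`
with `a`. -/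
def substGenome {K : Type*} {n : ℕ} (I : Finset (Fin n)) (x : Fin n → K) (a : ↥I → K) :
    Fin n → K :=
  fun j => if h : j ∈ I then a ⟨j, h⟩ else x j

/-- The right-hand side of the mutation–recombination equation. -/
def mutRecRHS {K : Type*} [Fintype K] [DecidableEq K] {n : ℕ}
    (α : Fin n → K → K → ℝ) (κ : ℝ)
    (φ : (I : Finset (Fin n)) → (↥I → K) → (↥I → K) → ℝ)
    (μ : (Fin n → K) → ℝ) (x : Fin n → K) : ℝ :=
  (∑ i : Fin n, ∑ b : K,
      (α i b (x i) * μ (Function.update x i b) - α i (x i) b * μ x))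
  + κ * ∑ I : Finset (Fin n), ∑ a : ↥I → K,
      (φ I a (subword I x) * marginal μ I (subword I x) * μ (substGenome I x a)
        - φ I (subword I x) a * marginal μ I a * μ x)

/-! The proof is a relative-entropy argument. Put `L = log (μ / q_Λ)` and pair the fixed-point
equation with `L`: this writes `0` as the sum over sites `i` of the entropy production of
mutation at `i` plus `κ` times the sum over `I` of the entropy production of recombination at
`I`. By `log t ≤ t - 1` each term is `≤ 0`. For mutation this uses that `q_Λ` is stationary.
For recombination at `I`, `L` is `log (μ / P_I)`, where `P_I` is in detailed balance with the
recombination, plus a function of `x_I` only, and the latter pairs to zero because `φ` is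
symmetric. Hence every mutation term vanishes, and the equality case of `log t ≤ t - 1` makes
`μ / q_Λ` constant along every mutation of positive rate, so constant by irreducibility.
Irreducibility also gives `μ > 0`, which the logarithms need: a zero of `μ` propagates
backwards along mutations. -/

open Finset Function Real

theorem mul_log_sub_log_div_le {m p v : ℝ} (hm : 0 < m) (hp : 0 < p) (hv : 0 < v) :
    m * (log v - log (m / p)) ≤ p * v - m := by
  have hlog : log v - log (m / p) = log (v * p / m) := by
    rw [← log_div hv.ne' (by positivity)]; congr 1; field_simp
  calc m * (log v - log (m / p)) ≤ m * (v * p / m - 1) := by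
        rw [hlog]; gcongr; exact log_le_sub_one_of_pos (by positivity)
    _ = p * v - m := by field_simp

theorem eq_div_of_mul_log_sub_log_div_eq {m p v : ℝ} (hm : 0 < m) (hp : 0 < p) (hv : 0 < v)
    (heq : m * (log v - log (m / p)) = p * v - m) : v = m / p := by
  by_contra hne
  have hlog : log v - log (m / p) = log (v * p / m) := by
    rw [← log_div hv.ne' (by positivity)]; congr 1; field_simp
  have hne' : v * p / m ≠ 1 := by
    contrapose! hne; field_simp; linarith [(div_eq_one_iff_eq hm.ne').1 hne]
  have hlt := mul_lt_mul_of_pos_left (log_lt_sub_one_of_pos (by positivity) hne') hm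
  rw [← hlog] at hlt
  have : m * (v * p / m - 1) = p * v - m := by field_simp
  linarith

theorem sum_sum_eq_zero_of_antisymm {ι : Type*} [Fintype ι] (f : ι → ι → ℝ)
    (hf : ∀ a b, f a b = -f b a) : ∑ a, ∑ b, f a b = 0 := by
  have hswap : ∑ a, ∑ b, f a b = -∑ a, ∑ b, f a b :=
    calc ∑ a, ∑ b, f a b = ∑ b, ∑ a, f a b := sum_comm
      _ = ∑ b, ∑ a, -f b a := sum_congr rfl fun b _ => sum_congr rfl fun a _ => hf a b
      _ = -∑ a, ∑ b, f a b := by simp only [sum_neg_distrib]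
  linarith

theorem eq_of_sum_eq_of_div_eq_div {X : Type*} [Fintype X] {μ Q : X → ℝ}
    (hQ : ∀ x, 0 < Q x) (hsum : ∑ x, μ x = ∑ x, Q x) (hratio : ∀ x y, μ x / Q x = μ y / Q y) :
    μ = Q := by
  funext z
  have hscale : ∀ x, μ x = μ z / Q z * Q x := fun x => by
    rw [← hratio x z, div_mul_cancel₀ _ (hQ x).ne']
  have hQsum : 0 < ∑ x, Q x := sum_pos (fun x _ => hQ x) ⟨z, mem_univ z⟩
  rw [sum_congr rfl fun x _ => hscale x, ← mul_sum] at hsum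
  have hone : μ z / Q z = 1 := by
    rwa [mul_eq_right₀ hQsum.ne'] at hsum
  rwa [div_eq_one_iff_eq (hQ z).ne'] at hone

section JumpFlux

variable {X J : Type*}

-- Net inflow at `x` of the jump process moving `x` to `F x j` at rate `w x j`; the jump
-- back from `F x j` to `x` is labelled `ρ x`.
def jumpFlux [Fintype J] (F : X → J → X) (ρ : X → J) (w : X → J → ℝ) (μ : X → ℝ) (x : X) :
    ℝ :=
  ∑ j, (w (F x j) (ρ x) * μ (F x j) - w x j * μ x)

variable {F : X → J → X} {ρ : X → J} {w : X → J → ℝ} {μ P : X → ℝ}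

theorem jump_entropy_le (hμ : ∀ x, 0 < μ x) (hP : ∀ x, 0 < P x)
    (hw : ∀ x j, F x j ≠ x → 0 ≤ w x j) (x : X) (j : J) :
    w x j * μ x * (log (μ (F x j) / P (F x j)) - log (μ x / P x))
      ≤ w x j * (P x * (μ (F x j) / P (F x j)) - μ x) := by
  by_cases hfix : F x j = x
  · rw [hfix, mul_div_cancel₀ _ (hP x).ne']; simp
  · rw [mul_assoc]
    exact mul_le_mul_of_nonneg_left
      (mul_log_sub_log_div_le (hμ x) (hP x) (div_pos (hμ _) (hP _))) (hw x j hfix)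

variable [Fintype J]

theorem jumpFlux_eq_zero_of_detailed_balance
    (hbal : ∀ x j, P x * w x j = P (F x j) * w (F x j) (ρ x)) (x : X) :
    jumpFlux F ρ w P x = 0 :=
  sum_eq_zero fun j _ => by linarith [hbal x j]

variable [Fintype X]

theorem sum_mul_jumpFlux (hinv : Involutive fun p : X × J => (F p.1 p.2, ρ p.1))
    (w : X → J → ℝ) (μ g : X → ℝ) :
    ∑ x, g x * jumpFlux F ρ w μ x
      = ∑ p : X × J, w p.1 p.2 * μ p.1 * (g (F p.1 p.2) - g p.1) := by
  have hswap := Equiv.sum_comp hinv.toPerm fun p => g (F p.1 p.2) * w p.1 p.2 * μ p.1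
  have hback : ∀ p : X × J, F (F p.1 p.2) (ρ p.1) = p.1 := fun p => congrArg Prod.fst (hinv p)
  simp only [Involutive.coe_toPerm, hback] at hswap
  calc ∑ x, g x * jumpFlux F ρ w μ x
      = ∑ p : X × J, (g p.1 * w (F p.1 p.2) (ρ p.1) * μ (F p.1 p.2)
          - g p.1 * w p.1 p.2 * μ p.1) := by
        rw [Fintype.sum_prod_type]
        refine sum_congr rfl fun x _ => ?_
        rw [jumpFlux, mul_sum]
        exact sum_congr rfl fun j _ => by ring
    _ = _ := by
        rw [sum_sub_distrib, hswap, ← sum_sub_distrib]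
        exact sum_congr rfl fun p _ => by ring

theorem sum_jump_entropy_bound_eq_zero (hinv : Involutive fun p : X × J => (F p.1 p.2, ρ p.1))
    (hP : ∀ x, 0 < P x) (hstat : ∀ x, jumpFlux F ρ w P x = 0) :
    ∑ p : X × J, w p.1 p.2 * (P p.1 * (μ (F p.1 p.2) / P (F p.1 p.2)) - μ p.1) = 0 := by
  have h := sum_mul_jumpFlux hinv w P fun x => μ x / P x
  simp only [hstat, mul_zero, sum_const_zero] at h
  rw [h]
  refine sum_congr rfl fun p _ => ?_
  rw [mul_assoc, mul_sub (P p.1), mul_div_cancel₀ _ (hP p.1).ne', mul_sub]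

theorem sum_log_mul_jumpFlux_nonpos (hinv : Involutive fun p : X × J => (F p.1 p.2, ρ p.1))
    (hμ : ∀ x, 0 < μ x) (hP : ∀ x, 0 < P x) (hw : ∀ x j, F x j ≠ x → 0 ≤ w x j)
    (hstat : ∀ x, jumpFlux F ρ w P x = 0) :
    ∑ x, log (μ x / P x) * jumpFlux F ρ w μ x ≤ 0 := by
  rw [sum_mul_jumpFlux hinv, ← sum_jump_entropy_bound_eq_zero hinv hP hstat]
  exact sum_le_sum fun p _ => jump_entropy_le hμ hP hw p.1 p.2

theorem ratio_eq_of_sum_log_mul_jumpFlux_eq_zero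
    (hinv : Involutive fun p : X × J => (F p.1 p.2, ρ p.1))
    (hμ : ∀ x, 0 < μ x) (hP : ∀ x, 0 < P x) (hw : ∀ x j, F x j ≠ x → 0 ≤ w x j)
    (hstat : ∀ x, jumpFlux F ρ w P x = 0)
    (h0 : ∑ x, log (μ x / P x) * jumpFlux F ρ w μ x = 0) {x : X} {j : J} (hwx : 0 < w x j) :
    μ (F x j) / P (F x j) = μ x / P x := by
  rw [sum_mul_jumpFlux hinv, ← sum_jump_entropy_bound_eq_zero hinv hP hstat] at h0
  have hterm := (sum_eq_sum_iff_of_le fun p _ => jump_entropy_le hμ hP hw p.1 p.2).1 h0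
    (x, j) (mem_univ _)
  rw [mul_assoc] at hterm
  exact eq_div_of_mul_log_sub_log_div_eq (hμ x) (hP x) (div_pos (hμ _) (hP _))
    (mul_left_cancel₀ hwx.ne' hterm)

end JumpFlux

section Genome

variable {K : Type*} {n : ℕ}

theorem subword_substGenome (I : Finset (Fin n)) (x : Fin n → K) (a : ↥I → K) :
    subword I (substGenome I x a) = a := by
  funext i; simp [subword, substGenome, i.2]

theorem involutive_update_eval (i : Fin n) :
    Involutive fun p : (Fin n → K) × K => (update p.1 i p.2, p.1 i) :=
  fun p => by simp

theorem involutive_substGenome_subword (I : Finset (Fin n)) :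
    Involutive fun p : (Fin n → K) × (↥I → K) => (substGenome I p.1 p.2, subword I p.1) := by
  rintro ⟨x, a⟩
  refine Prod.ext (funext fun j => ?_) (subword_substGenome I x a)
  by_cases hj : j ∈ I <;> simp [substGenome, subword, hj]

theorem prod_update_mul (q : Fin n → K → ℝ) (x : Fin n → K) (i : Fin n) (b : K) :
    (∏ j, q j (update x i b j)) * q i (x i) = (∏ j, q j (x j)) * q i b := by
  rw [← mul_prod_erase univ (fun j => q j (update x i b j)) (mem_univ i),
    ← mul_prod_erase univ (fun j => q j (x j)) (mem_univ i),
    prod_congr rfl fun j hj => by rw [update_of_ne (ne_of_mem_erase hj)], update_self]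
  ring

theorem prod_substGenome_mul (q : Fin n → K → ℝ) (I : Finset (Fin n)) (x : Fin n → K)
    (a : ↥I → K) :
    (∏ j, q j (substGenome I x a j)) * ∏ i : ↥I, q i (subword I x i)
      = (∏ j, q j (x j)) * ∏ i : ↥I, q i (a i) := by
  have hout : ∏ j ∈ Iᶜ, q j (substGenome I x a j) = ∏ j ∈ Iᶜ, q j (x j) :=
    prod_congr rfl fun j hj => by rw [substGenome, dif_neg (by simpa using hj)]
  have hin : ∏ j ∈ I, q j (substGenome I x a j) = ∏ i : ↥I, q i (a i) := by
    rw [← prod_coe_sort]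
    exact Fintype.prod_congr _ _ fun i => by simp [substGenome, i.2]
  rw [← prod_mul_prod_compl I fun j => q j (substGenome I x a j),
    ← prod_mul_prod_compl I fun j => q j (x j), hout, hin, ← prod_coe_sort I]
  simp only [subword]
  ring

def MutationStep (α : Fin n → K → K → ℝ) (x y : Fin n → K) : Prop :=
  ∃ i c, 0 < α i (x i) c ∧ update x i c = y

theorem reflTransGen_mutationStep {α : Fin n → K → K → ℝ}
    (hα_conn : ∀ i a b, Relation.ReflTransGen (fun u v => 0 < α i u v) a b)
    (x y : Fin n → K) : Relation.ReflTransGen (MutationStep α) x y := by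
  have hsite : ∀ (z : Fin n → K) i b, Relation.ReflTransGen (MutationStep α) z (update z i b) :=
    fun z i b => by
      simpa [onFun] using (hα_conn i (z i) b).lift (p := MutationStep α) (update z i)
        fun u v huv => ⟨i, v, by simpa using huv, by simp⟩
  classical
  have hpiece : ∀ s : Finset (Fin n),
      Relation.ReflTransGen (MutationStep α) x (s.piecewise y x) := by
    intro s
    induction s using Finset.induction_on with
    | empty => simp [Relation.ReflTransGen.refl]
    | insert i s _ ih => rw [piecewise_insert]; exact ih.trans (hsite _ i (y i))
  simpa using hpiece univ

theorem MutationStep.propagate {α : Fin n → K → K → ℝ}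
    (hα_conn : ∀ i a b, Relation.ReflTransGen (fun u v => 0 < α i u v) a b)
    {p : (Fin n → K) → Prop} (hp : ∀ x y, MutationStep α x y → p x → p y)
    {x : Fin n → K} (hx : p x) (y : Fin n → K) : p y := by
  induction reflTransGen_mutationStep hα_conn x y with
  | refl => exact hx
  | tail _ hstep ih => exact hp _ _ hstep ih

variable [Fintype K] [DecidableEq K]

theorem marginal_nonneg {μ : (Fin n → K) → ℝ} (hμ : ∀ x, 0 ≤ μ x) (I : Finset (Fin n))
    (a : ↥I → K) : 0 ≤ marginal μ I a :=
  sum_nonneg fun x _ => by split_ifs <;> simp [hμ x]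

theorem marginal_subword_pos {μ : (Fin n → K) → ℝ} (hμ : ∀ x, 0 < μ x) (I : Finset (Fin n))
    (x : Fin n → K) : 0 < marginal μ I (subword I x) :=
  sum_pos' (fun y _ => by split_ifs <;> simp [(hμ y).le]) ⟨x, mem_univ x, by simp [hμ x]⟩

theorem sum_mul_subword (μ : (Fin n → K) → ℝ) (I : Finset (Fin n)) (g : (↥I → K) → ℝ) :
    ∑ x, μ x * g (subword I x) = ∑ a, marginal μ I a * g a := by
  simp only [marginal, sum_mul, ite_mul, zero_mul]
  rw [sum_comm]
  exact sum_congr rfl fun x _ => by simp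

def recombinationRate (φ : (I : Finset (Fin n)) → (↥I → K) → (↥I → K) → ℝ)
    (μ : (Fin n → K) → ℝ) (I : Finset (Fin n)) (x : Fin n → K) (a : ↥I → K) : ℝ :=
  φ I (subword I x) a * marginal μ I a

theorem mutRecRHS_eq_jumpFlux (α : Fin n → K → K → ℝ) (κ : ℝ)
    (φ : (I : Finset (Fin n)) → (↥I → K) → (↥I → K) → ℝ) (μ : (Fin n → K) → ℝ)
    (x : Fin n → K) :
    mutRecRHS α κ φ μ x
      = ∑ i, jumpFlux (fun x c => update x i c) (· i) (fun x c => α i (x i) c) μ x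
        + κ * ∑ I, jumpFlux (substGenome I) (subword I) (recombinationRate φ μ I) μ x := by
  simp [mutRecRHS, jumpFlux, recombinationRate, subword_substGenome]

theorem sum_mul_mutRecRHS (α : Fin n → K → K → ℝ) (κ : ℝ)
    (φ : (I : Finset (Fin n)) → (↥I → K) → (↥I → K) → ℝ) (μ g : (Fin n → K) → ℝ) :
    ∑ x, g x * mutRecRHS α κ φ μ x
      = ∑ i, ∑ x, g x * jumpFlux (fun x c => update x i c) (· i) (fun x c => α i (x i) c) μ x
        + κ * ∑ I, ∑ x, g x
          * jumpFlux (substGenome I) (subword I) (recombinationRate φ μ I) μ x := by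
  simp only [mutRecRHS_eq_jumpFlux, mul_add, sum_add_distrib, mul_sum, mul_left_comm (g _) κ]
  rw [sum_comm, sum_comm (s := univ) (t := univ) (f := fun x (I : Finset (Fin n)) => κ * _)]

theorem eq_zero_of_mutRecRHS_eq_zero {α : Fin n → K → K → ℝ} {κ : ℝ}
    {φ : (I : Finset (Fin n)) → (↥I → K) → (↥I → K) → ℝ} {μ : (Fin n → K) → ℝ}
    (hα_off : ∀ i a b, a ≠ b → 0 ≤ α i a b) (hκ : 0 ≤ κ) (hφ_nonneg : ∀ I a b, 0 ≤ φ I a b)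
    (hμ : ∀ x, 0 ≤ μ x) {x : Fin n → K} (hx : μ x = 0) (hfix : mutRecRHS α κ φ μ x = 0)
    {i : Fin n} {b : K} (hb : 0 < α i b (x i)) : μ (update x i b) = 0 := by
  have hmut : ∀ j c, 0 ≤ α j c (x j) * μ (update x j c) - α j (x j) c * μ x := by
    intro j c
    rw [hx, mul_zero, sub_zero]
    by_cases hc : c = x j
    · rw [hc, update_eq_self, hx, mul_zero]
    · exact mul_nonneg (hα_off j c (x j) hc) (hμ _)
  have hrec : 0 ≤ κ * ∑ I : Finset (Fin n), ∑ a : ↥I → K,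
      (φ I a (subword I x) * marginal μ I (subword I x) * μ (substGenome I x a)
        - φ I (subword I x) a * marginal μ I a * μ x) :=
    mul_nonneg hκ <| sum_nonneg fun I _ => sum_nonneg fun a _ => by
      rw [hx, mul_zero, sub_zero]
      exact mul_nonneg (mul_nonneg (hφ_nonneg _ _ _) (marginal_nonneg hμ I _)) (hμ _)
  have hle : α i b (x i) * μ (update x i b) ≤ α i b (x i) * 0 :=
    calc α i b (x i) * μ (update x i b)
        = α i b (x i) * μ (update x i b) - α i (x i) b * μ x := by rw [hx]; ring
      _ ≤ ∑ c, (α i c (x i) * μ (update x i c) - α i (x i) c * μ x) :=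
        single_le_sum (fun c _ => hmut i c) (mem_univ b)
      _ ≤ ∑ j, ∑ c, (α j c (x j) * μ (update x j c) - α j (x j) c * μ x) :=
        single_le_sum (f := fun j => ∑ c, (α j c (x j) * μ (update x j c) - α j (x j) c * μ x))
          (fun j _ => sum_nonneg fun c _ => hmut j c) (mem_univ i)
      _ ≤ mutRecRHS α κ φ μ x := le_add_of_nonneg_right hrec
      _ = α i b (x i) * 0 := by rw [hfix, mul_zero]
  exact le_antisymm (le_of_mul_le_mul_left hle hb) (hμ _)

theorem pos_of_mutRecRHS_eq_zero {α : Fin n → K → K → ℝ} {κ : ℝ}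
    {φ : (I : Finset (Fin n)) → (↥I → K) → (↥I → K) → ℝ} {μ : (Fin n → K) → ℝ}
    (hα_off : ∀ i a b, a ≠ b → 0 ≤ α i a b)
    (hα_conn : ∀ i a b, Relation.ReflTransGen (fun u v => 0 < α i u v) a b)
    (hκ : 0 ≤ κ) (hφ_nonneg : ∀ I a b, 0 ≤ φ I a b) (hμ : ∀ x, 0 ≤ μ x) (hμ_sum : ∑ x, μ x = 1)
    (hfix : ∀ x, mutRecRHS α κ φ μ x = 0) (x : Fin n → K) : 0 < μ x := by
  obtain ⟨x₀, -, hx₀⟩ := exists_ne_zero_of_sum_ne_zero (hμ_sum.trans_ne one_ne_zero)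
  refine MutationStep.propagate hα_conn (p := fun y => 0 < μ y) ?_ ((hμ x₀).lt_of_ne' hx₀) x
  rintro y _ ⟨i, c, hc, rfl⟩ hy
  refine (hμ _).lt_of_ne' fun h0 => hy.ne' ?_
  simpa using eq_zero_of_mutRecRHS_eq_zero hα_off hκ hφ_nonneg hμ h0 (hfix _) (i := i) (b := y i)
    (by simpa using hc)

theorem jumpFlux_update_prod_eq_zero {α : Fin n → K → K → ℝ}
    (hα_diag : ∀ i a, α i a a = -∑ b ∈ univ.erase a, α i a b) {q : Fin n → K → ℝ}
    (hq_pos : ∀ i a, 0 < q i a) (hq_stat : ∀ i b, ∑ a, q i a * α i a b = 0)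
    (i : Fin n) (x : Fin n → K) :
    jumpFlux (fun x c => update x i c) (· i) (fun x c => α i (x i) c)
      (fun z => ∏ j, q j (z j)) x = 0 := by
  have hrow : ∑ b, α i (x i) b = 0 := by
    rw [← add_sum_erase _ _ (mem_univ (x i)), hα_diag]; ring
  have hupdate : ∀ b, ∏ j, q j (update x i b j) = (∏ j, q j (x j)) / q i (x i) * q i b :=
    fun b => by
      rw [div_mul_eq_mul_div, eq_div_iff (hq_pos i (x i)).ne', prod_update_mul]
  simp only [jumpFlux, update_self, hupdate]
  calc ∑ b, (α i b (x i) * ((∏ j, q j (x j)) / q i (x i) * q i b)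
        - α i (x i) b * ∏ j, q j (x j))
      = (∏ j, q j (x j)) / q i (x i) * ∑ b, q i b * α i b (x i)
        - (∏ j, q j (x j)) * ∑ b, α i (x i) b := by
        rw [mul_sum, mul_sum, ← sum_sub_distrib]
        exact sum_congr rfl fun b _ => by ring
    _ = 0 := by rw [hq_stat, hrow]; ring

-- `q_Λ` with its `I`-marginal replaced by `μ_I`: it is in detailed balance with the
-- recombination at `I`, and its log-ratio to `q_Λ` depends on `x_I` only.
noncomputable def prodWithMarginal (q : Fin n → K → ℝ) (μ : (Fin n → K) → ℝ) (I : Finset (Fin n))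
    (x : Fin n → K) : ℝ :=
  (∏ j, q j (x j)) * (marginal μ I (subword I x) / ∏ i : ↥I, q i (subword I x i))

theorem prodWithMarginal_detailed_balance {q : Fin n → K → ℝ} (hq_pos : ∀ i a, 0 < q i a)
    {φ : (I : Finset (Fin n)) → (↥I → K) → (↥I → K) → ℝ} (hφ_symm : ∀ I a b, φ I a b = φ I b a)
    (μ : (Fin n → K) → ℝ) (I : Finset (Fin n)) (x : Fin n → K) (a : ↥I → K) :
    prodWithMarginal q μ I x * recombinationRate φ μ I x a
      = prodWithMarginal q μ I (substGenome I x a)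
        * recombinationRate φ μ I (substGenome I x a) (subword I x) := by
  have hqI : ∀ b : ↥I → K, 0 < ∏ i : ↥I, q i (b i) := fun b => prod_pos fun i _ => hq_pos _ _
  have hprod := prod_substGenome_mul q I x a
  simp only [prodWithMarginal, recombinationRate, subword_substGenome, hφ_symm I a]
  rw [mul_div_assoc', mul_div_assoc', div_mul_eq_mul_div, div_mul_eq_mul_div,
    div_eq_div_iff (hqI _).ne' (hqI a).ne']
  linear_combination -(marginal μ I (subword I x) * φ I (subword I x) a * marginal μ I a) * hprod

theorem sum_subword_mul_jumpFlux_recombination_eq_zero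
    {φ : (I : Finset (Fin n)) → (↥I → K) → (↥I → K) → ℝ} (hφ_symm : ∀ I a b, φ I a b = φ I b a)
    (μ : (Fin n → K) → ℝ) (I : Finset (Fin n)) (g : (↥I → K) → ℝ) :
    ∑ x, g (subword I x) * jumpFlux (substGenome I) (subword I) (recombinationRate φ μ I) μ x
      = 0 := by
  have h := sum_mul_jumpFlux (involutive_substGenome_subword I) (recombinationRate φ μ I) μ
    (g ∘ subword I)
  simp only [comp_apply, subword_substGenome, recombinationRate, Fintype.sum_prod_type] at h
  rw [h]
  calc ∑ x, ∑ a, φ I (subword I x) a * marginal μ I a * μ x * (g a - g (subword I x))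
      = ∑ x, μ x * ∑ a, φ I (subword I x) a * marginal μ I a * (g a - g (subword I x)) :=
        sum_congr rfl fun x _ => by rw [mul_sum]; exact sum_congr rfl fun a _ => by ring
    _ = ∑ b, ∑ a, marginal μ I b * marginal μ I a * φ I b a * (g a - g b) := by
        rw [sum_mul_subword μ I fun b => ∑ a, φ I b a * marginal μ I a * (g a - g b)]
        exact sum_congr rfl fun b _ => by rw [mul_sum]; exact sum_congr rfl fun a _ => by ring
    _ = 0 := sum_sum_eq_zero_of_antisymm _ fun b a => by rw [hφ_symm]; ring

theorem sum_log_mul_jumpFlux_recombination_nonpos {q : Fin n → K → ℝ}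
    (hq_pos : ∀ i a, 0 < q i a) {φ : (I : Finset (Fin n)) → (↥I → K) → (↥I → K) → ℝ}
    (hφ_symm : ∀ I a b, φ I a b = φ I b a) (hφ_nonneg : ∀ I a b, 0 ≤ φ I a b)
    {μ : (Fin n → K) → ℝ} (hμ : ∀ x, 0 < μ x) (I : Finset (Fin n)) :
    ∑ x, log (μ x / ∏ j, q j (x j))
        * jumpFlux (substGenome I) (subword I) (recombinationRate φ μ I) μ x ≤ 0 := by
  have hQ : ∀ x : Fin n → K, 0 < ∏ j, q j (x j) := fun x => prod_pos fun j _ => hq_pos j _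
  have hqI : ∀ b : ↥I → K, 0 < ∏ i : ↥I, q i (b i) := fun b => prod_pos fun i _ => hq_pos _ _
  have hP : ∀ x, 0 < prodWithMarginal q μ I x := fun x =>
    mul_pos (hQ x) (div_pos (marginal_subword_pos hμ I x) (hqI _))
  have hsplit : ∀ x, log (μ x / ∏ j, q j (x j)) = log (μ x / prodWithMarginal q μ I x)
      + log (marginal μ I (subword I x) / ∏ i : ↥I, q i (subword I x i)) := fun x => by
    rw [← log_mul (div_pos (hμ x) (hP x)).ne' (div_pos (marginal_subword_pos hμ I x) (hqI _)).ne',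
      prodWithMarginal]
    have := (marginal_subword_pos hμ I x).ne'
    have := (hqI (subword I x)).ne'
    field_simp
  simp only [hsplit, add_mul, sum_add_distrib]
  rw [sum_subword_mul_jumpFlux_recombination_eq_zero hφ_symm μ I
    fun a => log (marginal μ I a / ∏ i : ↥I, q i (a i)), add_zero]
  exact sum_log_mul_jumpFlux_nonpos (involutive_substGenome_subword I) hμ hP
    (fun x a _ => mul_nonneg (hφ_nonneg _ _ _) (marginal_nonneg (fun x => (hμ x).le) I a))
    (jumpFlux_eq_zero_of_detailed_balance (prodWithMarginal_detailed_balance hq_pos hφ_symm μ I))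

end Genome

/-- the product distribution `q_Λ(x) = ∏_i q_i(x_i)` is the unique fixed
point of the mutation–recombination equation: every probability measure `μ` at which the
right-hand side vanishes identically equals `q_Λ`. -/
theorem unique_fixed_point
    {K : Type*} [Fintype K] [DecidableEq K] {n : ℕ}
    (α : Fin n → K → K → ℝ)
    (hα_off : ∀ i : Fin n, ∀ a b : K, a ≠ b → 0 ≤ α i a b)
    (hα_diag : ∀ i : Fin n, ∀ a : K, α i a a = -∑ b ∈ Finset.univ.erase a, α i a b)
    (hα_conn : ∀ i : Fin n, ∀ a b : K,
      Relation.ReflTransGen (fun u v => 0 < α i u v) a b)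
    (q : Fin n → K → ℝ)
    (hq_pos : ∀ i a, 0 < q i a)
    (hq_sum : ∀ i, ∑ a, q i a = 1)
    (hq_stat : ∀ i : Fin n, ∀ b : K, ∑ a, q i a * α i a b = 0)
    (κ : ℝ) (hκ : 0 ≤ κ)
    (φ : (I : Finset (Fin n)) → (↥I → K) → (↥I → K) → ℝ)
    (hφ_symm : ∀ I a b, φ I a b = φ I b a)
    (hφ_nonneg : ∀ I a b, 0 ≤ φ I a b)
    (μ : (Fin n → K) → ℝ)
    (hμ_nonneg : ∀ x, 0 ≤ μ x)
    (hμ_sum : ∑ x, μ x = 1)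
    (hfix : ∀ x : Fin n → K, mutRecRHS α κ φ μ x = 0) :
    μ = fun z => ∏ i, q i (z i) := by
  have hμ := pos_of_mutRecRHS_eq_zero hα_off hα_conn hκ hφ_nonneg hμ_nonneg hμ_sum hfix
  have hQ : ∀ x : Fin n → K, 0 < ∏ i, q i (x i) := fun x => prod_pos fun i _ => hq_pos i _
  have hQsum : ∑ x : Fin n → K, ∏ i, q i (x i) = 1 := by
    rw [← Fintype.prod_sum, prod_eq_one fun i _ => hq_sum i]
  have hw : ∀ i (x : Fin n → K) c, update x i c ≠ x → 0 ≤ α i (x i) c :=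
    fun i x c hc => hα_off i _ _ fun h => hc (by rw [← h, update_eq_self])
  have hstat := jumpFlux_update_prod_eq_zero hα_diag hq_pos hq_stat
  have hmut : ∀ i, ∑ x, log (μ x / ∏ j, q j (x j))
      * jumpFlux (fun x c => update x i c) (· i) (fun x c => α i (x i) c) μ x ≤ 0 :=
    fun i => sum_log_mul_jumpFlux_nonpos (involutive_update_eval i) hμ hQ (hw i) (hstat i)
  have hrec := sum_log_mul_jumpFlux_recombination_nonpos hq_pos hφ_symm hφ_nonneg hμ
  have htotal := sum_mul_mutRecRHS α κ φ μ fun x => log (μ x / ∏ j, q j (x j))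
  simp only [hfix, mul_zero, sum_const_zero] at htotal
  have hmut0 : ∀ i ∈ univ, ∑ x, log (μ x / ∏ j, q j (x j))
      * jumpFlux (fun x c => update x i c) (· i) (fun x c => α i (x i) c) μ x = 0 := by
    refine (sum_eq_zero_iff_of_nonpos fun i _ => hmut i).1
      (le_antisymm (sum_nonpos fun i _ => hmut i) ?_)
    linarith [mul_nonpos_of_nonneg_of_nonpos hκ (sum_nonpos fun I (_ : I ∈ univ) => hrec I)]
  have hstep : ∀ x y, MutationStep α x y → μ x / ∏ j, q j (x j) = μ y / ∏ j, q j (y j) := by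
    rintro x _ ⟨i, c, hc, rfl⟩
    exact (ratio_eq_of_sum_log_mul_jumpFlux_eq_zero (involutive_update_eval i) hμ hQ (hw i)
      (hstat i) (hmut0 i (mem_univ i)) hc).symm
  refine eq_of_sum_eq_of_div_eq_div hQ (hμ_sum.trans hQsum.symm) fun x y => ?_
  exact MutationStep.propagate hα_conn (p := fun z => _ = μ z / ∏ j, q j (z j))
    (fun y z hyz hy => hy.trans (hstep y z hyz)) rfl y
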